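/- Let n ≥ 2, δ > 2 log n + 3, and let a, b ∈ ℝⁿ be strictly decreasing with gaps exceeding δ (i.e., a_i − a_j > δ and b_i − b_j > δ whenever i < j) and mutually δ-separated (|a_i − b_j| > δ whenever a_i ≠ b_j). Suppose there exists k ∈ {0, 1, …, n−1} such that (a_1,…,a_k) = (b_1,…,b_k) and a_{k+1} > b_{k+1}. Then |Boltz(a) − Boltz(b)| > (log n)² · e^{−(a_1 − b_{k+1})}. -/

import Mathlib

/-!
Normalised at a reference value r, Boltz(c) = r - M/Z with Z = Σ exp (c_i - r) and
M = Σ (r - c_i) exp (c_i - r). For r = c_0 the δ-gaps make the weights decay geometrically, so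
Z ≤ 20/19 and M ≤ δ/10 once δ ≥ 3.

If k = 0, then Boltz(a) ≥ a_0 - δ/10 while Boltz(b) ≤ b_0 < a_0 - δ. Otherwise a and b agree up to
index k - 1, in particular at the top. With d = a_0 - a_k, the single entry a_k adds d e^{-d} to
M(a), whereas the whole tail of b from index k on lies at least d + δ below the top and only adds
O(d e^{-d} e^{-δ}). Comparing the two quotients gives Boltz(b) - Boltz(a) ≥ d e^{-d} / 2, and since
δ > 2 log n + 3 this beats (log n)² e^{-(a_0 - b_k)} ≤ n² e^{-δ} e^{-d} < e^{-3} e^{-d}.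
-/

open scoped BigOperators Classical
open Matrix

noncomputable section

def softmax {n : ℕ} (a : Fin n → ℝ) : Fin n → ℝ :=
  fun i => Real.exp (a i) / ∑ j, Real.exp (a j)

def boltz {n : ℕ} (a : Fin n → ℝ) : ℝ := ∑ i, a i * softmax a i

def argmaxSet {n : ℕ} (a : Fin n → ℝ) : Finset (Fin n) :=
  Finset.univ.filter (fun i => ∀ j, a j ≤ a i)

def hardmax {n : ℕ} (a : Fin n → ℝ) : Fin n → ℝ :=
  fun i => if i ∈ argmaxSet a then (1 : ℝ) / (argmaxSet a).card else 0

def softmaxCols {n m : ℕ} (A : Matrix (Fin n) (Fin m) ℝ) : Matrix (Fin n) (Fin m) ℝ :=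
  Matrix.of fun i k => softmax (fun j => A j k) i

def hardmaxCols {n m : ℕ} (A : Matrix (Fin n) (Fin m) ℝ) : Matrix (Fin n) (Fin m) ℝ :=
  Matrix.of fun i k => hardmax (fun j => A j k) i

def attnS {d n s : ℕ} (WO : Matrix (Fin d) (Fin s) ℝ)
    (WV WK WQ : Matrix (Fin s) (Fin d) ℝ) (Z : Matrix (Fin d) (Fin n) ℝ) :
    Matrix (Fin d) (Fin n) ℝ :=
  Z + WO * (WV * Z) * softmaxCols ((WK * Z)ᵀ * (WQ * Z))

def attnH {d n s h : ℕ} (WO : Fin h → Matrix (Fin d) (Fin s) ℝ)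
    (WV WK WQ : Fin h → Matrix (Fin s) (Fin d) ℝ) (Z : Matrix (Fin d) (Fin n) ℝ) :
    Matrix (Fin d) (Fin n) ℝ :=
  Z + ∑ i, WO i * (WV i * Z) * hardmaxCols ((WK i * Z)ᵀ * (WQ i * Z))

def l2norm {d : ℕ} (x : Fin d → ℝ) : ℝ := Real.sqrt (∑ t, (x t) ^ 2)

def TokSep {d n N : ℕ} (rmin rmax δ : ℝ) (X : Fin N → Matrix (Fin d) (Fin n) ℝ) : Prop :=
  (∀ i k, rmin < l2norm (fun t => X i t k)) ∧
  (∀ i k, l2norm (fun t => X i t k) < rmax) ∧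
  (∀ i j k l, (fun t => X i t k) ≠ (fun t => X j t l) →
    δ < l2norm (fun t => X i t k - X j t l))

def vocab {d n : ℕ} (X : Matrix (Fin d) (Fin n) ℝ) : Finset (Fin d → ℝ) :=
  Finset.image (fun k => (fun t => X t k)) Finset.univ

def ContextualMapping {d n N : ℕ} (X : Fin N → Matrix (Fin d) (Fin n) ℝ)
    (q : Matrix (Fin d) (Fin n) ℝ → Matrix (Fin d) (Fin n) ℝ) (r δ : ℝ) : Prop :=
  (∀ i k, l2norm (fun t => q (X i) t k) < r) ∧
  (∀ i j k l, (vocab (X i) ≠ vocab (X j) ∨ (fun t => X i t k) ≠ (fun t => X j t l)) →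
    δ < l2norm (fun t => q (X i) t k - q (X j) t l))

def ffn {d n q : ℕ} (W1 : Matrix (Fin q) (Fin d) ℝ) (W2 : Matrix (Fin d) (Fin q) ℝ)
    (b1 : Fin q → ℝ) (b2 : Fin d → ℝ) (H : Matrix (Fin d) (Fin n) ℝ) :
    Matrix (Fin d) (Fin n) ℝ :=
  Matrix.of fun t k =>
    H t k + W2.mulVec (fun u => max 0 (W1.mulVec (fun t' => H t' k) u + b1 u)) t + b2 t

def logSumExp {n : ℕ} (a : Fin n → ℝ) : ℝ := Real.log (∑ i, Real.exp (a i))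

def entS {n : ℕ} (p : Fin n → ℝ) : ℝ := -∑ i, p i * Real.log (p i)

open Real Finset

section ShiftedSums

variable {ι : Type*}

def expSum (s : Finset ι) (c : ι → ℝ) (r : ℝ) : ℝ := ∑ i ∈ s, exp (c i - r)

def gapExpSum (s : Finset ι) (c : ι → ℝ) (r : ℝ) : ℝ := ∑ i ∈ s, (r - c i) * exp (c i - r)

lemma expSum_rebase (s : Finset ι) (c : ι → ℝ) (r r' : ℝ) :
    expSum s c r = exp (r' - r) * expSum s c r' := by
  simp only [expSum, mul_sum, ← exp_add, sub_add_sub_cancel']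

lemma gapExpSum_rebase (s : Finset ι) (c : ι → ℝ) (r r' : ℝ) :
    gapExpSum s c r = exp (r' - r) * ((r - r') * expSum s c r' + gapExpSum s c r') := by
  simp only [gapExpSum, expSum, mul_sum, ← sum_add_distrib]
  refine sum_congr rfl fun i _ => ?_
  rw [show c i - r = (r' - r) + (c i - r') by ring, exp_add]
  ring

lemma expSum_congr {s : Finset ι} {c c' : ι → ℝ} (h : ∀ i ∈ s, c i = c' i) (r : ℝ) :
    expSum s c r = expSum s c' r :=
  sum_congr rfl fun i hi => by rw [h i hi]

lemma gapExpSum_congr {s : Finset ι} {c c' : ι → ℝ} (h : ∀ i ∈ s, c i = c' i) (r : ℝ) :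
    gapExpSum s c r = gapExpSum s c' r :=
  sum_congr rfl fun i hi => by rw [h i hi]

lemma exp_sub_le_expSum {s : Finset ι} {k : ι} (hk : k ∈ s) (c : ι → ℝ) (r : ℝ) :
    exp (c k - r) ≤ expSum s c r :=
  single_le_sum (f := fun i => exp (c i - r)) (fun _ _ => (exp_pos _).le) hk

lemma gapExpSum_nonneg {s : Finset ι} {c : ι → ℝ} {r : ℝ} (h : ∀ i ∈ s, c i ≤ r) :
    0 ≤ gapExpSum s c r :=
  sum_nonneg fun i hi => mul_nonneg (sub_nonneg.2 (h i hi)) (exp_pos _).le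

lemma mul_exp_le_gapExpSum {s : Finset ι} {k : ι} {c : ι → ℝ} {r : ℝ} (hk : k ∈ s)
    (h : ∀ i ∈ s, c i ≤ r) : (r - c k) * exp (c k - r) ≤ gapExpSum s c r :=
  single_le_sum (f := fun i => (r - c i) * exp (c i - r))
    (fun i hi => mul_nonneg (sub_nonneg.2 (h i hi)) (exp_pos _).le) hk

end ShiftedSums

lemma expSum_univ_eq_Iio_add_Ici {n : ℕ} (c : Fin n → ℝ) (r : ℝ) (k : Fin n) :
    expSum univ c r = expSum (Iio k) c r + expSum (Ici k) c r := by
  rw [expSum, expSum, expSum, ← sum_add_sum_compl (Iio k), show (Iio k)ᶜ = Ici k by ext; simp]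

lemma gapExpSum_univ_eq_Iio_add_Ici {n : ℕ} (c : Fin n → ℝ) (r : ℝ) (k : Fin n) :
    gapExpSum univ c r = gapExpSum (Iio k) c r + gapExpSum (Ici k) c r := by
  rw [gapExpSum, gapExpSum, gapExpSum, ← sum_add_sum_compl (Iio k),
    show (Iio k)ᶜ = Ici k by ext; simp]

lemma expSum_univ_pos {n : ℕ} [NeZero n] (c : Fin n → ℝ) (r : ℝ) : 0 < expSum univ c r :=
  (exp_pos _).trans_le (exp_sub_le_expSum (mem_univ 0) c r)

lemma boltz_eq_sub_div {n : ℕ} [NeZero n] (c : Fin n → ℝ) (r : ℝ) :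
    boltz c = r - gapExpSum univ c r / expSum univ c r := by
  have hZ := expSum_univ_pos c r
  have hM : gapExpSum univ c r = r * expSum univ c r - ∑ i, c i * exp (c i - r) := by
    simp only [gapExpSum, expSum, mul_sum, ← sum_sub_distrib, sub_mul]
  have hsoftmax : ∀ i, softmax c i = exp (c i - r) / expSum univ c r := by
    intro i
    simp only [softmax, expSum, exp_sub, ← sum_div]
    rw [div_div_div_cancel_right₀ (exp_pos r).ne']
  simp only [boltz, hsoftmax, hM, mul_div_assoc', ← sum_div]
  field_simp
  ring

lemma mul_exp_neg_le_mul_exp_neg {x y : ℝ} (hx : 1 ≤ x) (hxy : x ≤ y) :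
    y * exp (-y) ≤ x * exp (-x) := by
  have hy : y ≤ x * exp (y - x) := by
    nlinarith [add_one_le_exp (y - x), exp_pos (y - x)]
  calc y * exp (-y) ≤ x * exp (y - x) * exp (-y) := by gcongr
    _ = x * exp (-x) := by rw [mul_assoc, ← exp_add]; ring_nf

lemma exp_neg_lt_of_three_le {δ : ℝ} (hδ : 3 ≤ δ) : exp (-δ) < 1 / 20 := by
  have h : (20 : ℝ) < exp 1 ^ 3 :=
    calc (20 : ℝ) < 2.7182818283 ^ 3 := by norm_num
      _ < exp 1 ^ 3 := by gcongr; exact exp_one_gt_d9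
  refine (exp_le_exp.2 (neg_le_neg hδ)).trans_lt ?_
  rw [Real.exp_neg, one_div, show (3 : ℝ) = (3 : ℕ) by norm_num, ← exp_one_pow]
  exact inv_strictAnti₀ (by norm_num) h

lemma sq_le_exp_two_mul {x : ℝ} (hx : 0 ≤ x) : x ^ 2 ≤ exp (2 * x) := by
  rw [two_mul, exp_add]
  nlinarith [add_one_le_exp x]

lemma add_div_add_le_div_add {T S B C : ℝ} (hT : 0 ≤ T) (hS : 1 ≤ S) (hB : 0 ≤ B) (hC : 0 ≤ C) :
    (T + C) / (S + B) ≤ T / S + C := by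
  calc (T + C) / (S + B) ≤ (T + C) / S := by gcongr; linarith
    _ = T / S + C / S := add_div T C S
    _ ≤ T / S + C := by gcongr; exact div_le_self hC hS

lemma mul_div_two_le_add_div_add_sub_add_div_add {S₀ T₀ AS AT BS BT d E : ℝ} (hd : 0 ≤ d)
    (hE : 0 ≤ E) (hS₀ : 1 ≤ S₀) (hT₀ : 0 ≤ T₀) (hT₀d : T₀ ≤ d / 10) (hZ : S₀ + AS ≤ 20 / 19)
    (hAS0 : 0 ≤ AS) (hAS : AS ≤ 20 / 19 * E) (hAT : d * E ≤ AT) (hBS : 0 ≤ BS) (hBT0 : 0 ≤ BT)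
    (hBT : BT ≤ 7 / 60 * (d * E)) :
    d * E / 2 ≤ (T₀ + AT) / (S₀ + AS) - (T₀ + BT) / (S₀ + BS) := by
  have hρ : T₀ / S₀ ≤ d / 10 := (div_le_self hT₀ hS₀).trans hT₀d
  have hA : T₀ / S₀ + 17 / 20 * (d * E) ≤ (T₀ + AT) / (S₀ + AS) := by
    rw [le_div_iff₀ (by linarith)]
    have h1 : T₀ / S₀ * AS ≤ d / 10 * (20 / 19 * E) := mul_le_mul hρ hAS hAS0 (by linarith)
    have h2 : 17 / 20 * (d * E) * (S₀ + AS) ≤ 17 / 20 * (d * E) * (20 / 19) :=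
      mul_le_mul_of_nonneg_left hZ (by positivity)
    have h3 : T₀ / S₀ * S₀ = T₀ := div_mul_cancel₀ _ (by linarith)
    linarith
  linarith [add_div_add_le_div_add hT₀ hS₀ hBS hBT0]

section Gap

variable {n : ℕ} {δ : ℝ} {c : Fin n → ℝ}

lemma mul_le_sub_of_gap (hgap : ∀ i j : Fin n, i < j → δ < c i - c j) {i j : Fin n}
    (hij : i ≤ j) : (((j : ℕ) - i : ℕ) : ℝ) * δ ≤ c i - c j := by
  obtain ⟨m, hm⟩ : ∃ m, (j : ℕ) = i + m := ⟨j - i, by omega⟩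
  induction m generalizing j with
  | zero => simp [Fin.ext (a := j) (b := i) (by omega)]
  | succ m ih =>
    have hlt : (i : ℕ) + m < n := by omega
    have h1 := ih (j := ⟨i + m, hlt⟩) (by simp [Fin.le_def]) rfl
    have h2 := hgap ⟨i + m, hlt⟩ j (by simp [Fin.lt_def]; omega)
    simp only [hm, add_tsub_cancel_left] at h1 ⊢
    push_cast at h1 ⊢
    linarith

lemma antitone_of_gap (hδ : 0 ≤ δ) (hgap : ∀ i j : Fin n, i < j → δ < c i - c j) :
    Antitone c := fun i j hij => by
  nlinarith [mul_le_sub_of_gap hgap hij, Nat.cast_nonneg (α := ℝ) ((j : ℕ) - i)]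

lemma sum_Ici_le_tsum (k : Fin n) {g : ℕ → ℝ} (hg : ∀ m, 0 ≤ g m) (hs : Summable g) :
    ∑ i ∈ Ici k, g (i - k) ≤ ∑' m, g m := by
  rw [← sum_image (g := fun i : Fin n => (i : ℕ) - k)]
  · exact hs.sum_le_tsum _ fun m _ => hg m
  · intro x hx y hy hxy
    simp only [coe_Ici, Set.mem_Ici, Fin.le_def] at hx hy hxy
    exact Fin.ext (by omega)

variable (hgap : ∀ i j : Fin n, i < j → δ < c i - c j)
include hgap

lemma expSum_Ici_le (hδ : 0 < δ) (k : Fin n) :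
    expSum (Ici k) c (c k) ≤ (1 - exp (-δ))⁻¹ := by
  have hq : exp (-δ) < 1 := exp_lt_one_iff.2 (neg_neg_of_pos hδ)
  calc expSum (Ici k) c (c k) ≤ ∑ i ∈ Ici k, exp (-δ) ^ ((i : ℕ) - k) := by
        refine sum_le_sum fun i hi => ?_
        rw [← exp_nat_mul, exp_le_exp]
        linarith [mul_le_sub_of_gap hgap (mem_Ici.1 hi)]
    _ ≤ ∑' m : ℕ, exp (-δ) ^ m :=
        sum_Ici_le_tsum k (g := fun m : ℕ => exp (-δ) ^ m) (fun m => by positivity)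
          (summable_geometric_of_lt_one (exp_pos _).le hq)
    _ = (1 - exp (-δ))⁻¹ := tsum_geometric_of_lt_one (exp_pos _).le hq

lemma gapExpSum_Ici_le (hδ : 1 ≤ δ) (k : Fin n) :
    gapExpSum (Ici k) c (c k) ≤ δ * exp (-δ) / (1 - exp (-δ)) ^ 2 := by
  have hq : ‖exp (-δ)‖ < 1 := by
    rw [norm_of_nonneg (exp_pos _).le]; exact exp_lt_one_iff.2 (by linarith)
  calc gapExpSum (Ici k) c (c k)
        ≤ ∑ i ∈ Ici k, δ * ((((i : ℕ) - k : ℕ) : ℝ) * exp (-δ) ^ ((i : ℕ) - k)) := by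
        refine sum_le_sum fun i hi => ?_
        have hki := mem_Ici.1 hi
        rcases hki.eq_or_lt with rfl | hlt
        · simp
        have hm : (1 : ℝ) ≤ (((i : ℕ) - k : ℕ) : ℝ) := by
          rw [Fin.lt_def] at hlt; exact_mod_cast (by omega : 1 ≤ (i : ℕ) - k)
        calc (c k - c i) * exp (c i - c k) = (c k - c i) * exp (-(c k - c i)) := by
              rw [neg_sub]
          _ ≤ (((i : ℕ) - k : ℕ) * δ) * exp (-((((i : ℕ) - k : ℕ) : ℝ) * δ)) :=
              mul_exp_neg_le_mul_exp_neg (by nlinarith) (mul_le_sub_of_gap hgap hki)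
          _ = _ := by rw [← exp_nat_mul]; ring_nf
    _ ≤ ∑' m : ℕ, δ * (m * exp (-δ) ^ m) :=
        sum_Ici_le_tsum k (g := fun m : ℕ => δ * (m * exp (-δ) ^ m)) (fun m => by positivity)
          (by simpa using (summable_pow_mul_geometric_of_norm_lt_one 1 hq).mul_left δ)
    _ = δ * exp (-δ) / (1 - exp (-δ)) ^ 2 := by
        rw [tsum_mul_left, tsum_coe_mul_geometric_of_norm_lt_one hq, mul_div_assoc]

lemma expSum_Ici_le_of_three_le (hδ : 3 ≤ δ) (k : Fin n) :
    expSum (Ici k) c (c k) ≤ 20 / 19 := by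
  have hq := exp_neg_lt_of_three_le hδ
  refine (expSum_Ici_le hgap (by linarith) k).trans ?_
  rw [inv_le_comm₀ (by linarith) (by norm_num)]
  linarith

lemma gapExpSum_Ici_le_of_three_le (hδ : 3 ≤ δ) (k : Fin n) :
    gapExpSum (Ici k) c (c k) ≤ δ / 10 := by
  have hq := exp_neg_lt_of_three_le hδ
  have hq0 := exp_pos (-δ)
  refine (gapExpSum_Ici_le hgap (by linarith) k).trans ?_
  rw [div_le_iff₀ (by nlinarith)]
  nlinarith [mul_le_mul_of_nonneg_left hq.le (by linarith : (0 : ℝ) ≤ δ)]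

lemma gapExpSum_Ici_le_of_add_le_sub (hδ : 3 ≤ δ) {k : Fin n} {r d : ℝ} (hd : δ ≤ d)
    (hr : d + δ ≤ r - c k) : gapExpSum (Ici k) c r ≤ 7 / 60 * (d * exp (-d)) := by
  have hZ := expSum_Ici_le_of_three_le hgap hδ k
  have hM := gapExpSum_Ici_le_of_three_le hgap hδ k
  have hbracket : (r - c k) * expSum (Ici k) c (c k) + gapExpSum (Ici k) c (c k)
      ≤ 7 / 6 * (r - c k) := by nlinarith
  calc gapExpSum (Ici k) c r
        = exp (-(r - c k)) * ((r - c k) * expSum (Ici k) c (c k) + gapExpSum (Ici k) c (c k)) := by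
        rw [gapExpSum_rebase _ _ r (c k), neg_sub]
    _ ≤ 7 / 6 * ((r - c k) * exp (-(r - c k))) := by nlinarith [exp_pos (-(r - c k))]
    _ ≤ 7 / 6 * ((d + δ) * exp (-(d + δ))) := by
        have := mul_exp_neg_le_mul_exp_neg (by linarith) hr
        linarith
    _ = 7 / 6 * ((d + δ) * exp (-δ)) * exp (-d) := by rw [neg_add, exp_add]; ring
    _ ≤ 7 / 6 * (d / 10) * exp (-d) := by
        gcongr
        nlinarith [exp_neg_lt_of_three_le hδ, exp_pos (-δ)]
    _ = 7 / 60 * (d * exp (-d)) := by ring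

variable [NeZero n]

lemma expSum_univ_le_of_three_le (hδ : 3 ≤ δ) : expSum univ c (c 0) ≤ 20 / 19 := by
  simpa [show Ici (0 : Fin n) = univ by ext; simp] using expSum_Ici_le_of_three_le hgap hδ 0

lemma gapExpSum_univ_le_of_three_le (hδ : 3 ≤ δ) : gapExpSum univ c (c 0) ≤ δ / 10 := by
  simpa [show Ici (0 : Fin n) = univ by ext; simp] using gapExpSum_Ici_le_of_three_le hgap hδ 0

end Gap

section Boltz

variable {n : ℕ} [NeZero n]

lemma boltz_le_of_forall_le {c : Fin n → ℝ} {r : ℝ} (h : ∀ i, c i ≤ r) : boltz c ≤ r := by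
  rw [boltz_eq_sub_div c r]
  exact sub_le_self _ (div_nonneg (gapExpSum_nonneg fun i _ => h i) (expSum_univ_pos c r).le)

lemma sub_le_boltz_of_gap {δ : ℝ} {c : Fin n → ℝ} (hgap : ∀ i j : Fin n, i < j → δ < c i - c j)
    (hδ : 3 ≤ δ) : c 0 - δ / 10 ≤ boltz c := by
  have hZ : 1 ≤ expSum univ c (c 0) := by simpa using exp_sub_le_expSum (mem_univ 0) c (c 0)
  have hM0 : 0 ≤ gapExpSum univ c (c 0) :=
    gapExpSum_nonneg fun i _ => antitone_of_gap (by linarith) hgap (Fin.zero_le i)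
  rw [boltz_eq_sub_div c (c 0)]
  linarith [div_le_self hM0 hZ, gapExpSum_univ_le_of_three_le hgap hδ]

lemma mul_exp_neg_div_two_le_boltz_sub_boltz {δ : ℝ} (hδ : 3 ≤ δ) {a b : Fin n → ℝ}
    (hagap : ∀ i j : Fin n, i < j → δ < a i - a j) (hbgap : ∀ i j : Fin n, i < j → δ < b i - b j)
    {k : Fin n} (hk : 0 < k) (hpre : ∀ i < k, a i = b i) (hsep : δ ≤ a k - b k) :
    (a 0 - a k) * exp (-(a 0 - a k)) / 2 ≤ boltz b - boltz a := by
  set d := a 0 - a k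
  have hd : δ ≤ d := (hagap 0 k hk).le
  have ha : ∀ i, a i ≤ a 0 := fun i => antitone_of_gap (by linarith) hagap (Fin.zero_le i)
  have hb : ∀ i, b i ≤ a 0 := fun i =>
    (hpre 0 hk).symm ▸ antitone_of_gap (by linarith) hbgap (Fin.zero_le i)
  have hZa := expSum_univ_le_of_three_le hagap hδ
  have hMa := gapExpSum_univ_le_of_three_le hagap hδ
  rw [expSum_univ_eq_Iio_add_Ici _ _ k] at hZa
  rw [gapExpSum_univ_eq_Iio_add_Ici _ _ k] at hMa
  have hAS : expSum (Ici k) a (a 0) ≤ 20 / 19 * exp (-d) := by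
    rw [expSum_rebase _ _ (a 0) (a k), show a k - a 0 = -d by ring]
    nlinarith [expSum_Ici_le_of_three_le hagap hδ k, exp_pos (-d)]
  have hAT : d * exp (-d) ≤ gapExpSum (Ici k) a (a 0) := by
    have h := mul_exp_le_gapExpSum (c := a) (mem_Ici.2 (le_refl k)) fun i _ => ha i
    rwa [show a k - a 0 = -d by ring] at h
  have hT₀ := gapExpSum_nonneg (s := Iio k) fun i _ => ha i
  rw [boltz_eq_sub_div a (a 0), boltz_eq_sub_div b (a 0), expSum_univ_eq_Iio_add_Ici a _ k,
    gapExpSum_univ_eq_Iio_add_Ici a _ k, expSum_univ_eq_Iio_add_Ici b _ k,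
    gapExpSum_univ_eq_Iio_add_Ici b _ k, ← expSum_congr (fun i hi => hpre i (mem_Iio.1 hi)),
    ← gapExpSum_congr (fun i hi => hpre i (mem_Iio.1 hi)), sub_sub_sub_cancel_left]
  exact mul_div_two_le_add_div_add_sub_add_div_add (by linarith) (exp_pos _).le
    (by simpa using exp_sub_le_expSum (mem_Iio.2 hk) a (a 0)) hT₀
    (by nlinarith [exp_pos (-d)]) hZa (sum_nonneg fun i _ => (exp_pos _).le) hAS hAT
    (sum_nonneg fun i _ => (exp_pos _).le) (gapExpSum_nonneg fun i _ => hb i)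
    (gapExpSum_Ici_le_of_add_le_sub hbgap hδ hd (by linarith))

end Boltz

theorem statement14 (n : ℕ) (hn : 2 ≤ n) (δ : ℝ) (hδ : 2 * Real.log n + 3 < δ)
    (a b : Fin n → ℝ)
    (hagap : ∀ i j : Fin n, i < j → δ < a i - a j)
    (hbgap : ∀ i j : Fin n, i < j → δ < b i - b j)
    (hsep : ∀ i j : Fin n, a i ≠ b j → δ < |a i - b j|)
    (k : Fin n)
    (hpre : ∀ i : Fin n, i < k → a i = b i)
    (hk : b k < a k) :
    (Real.log n) ^ 2 * Real.exp (-(a ⟨0, by omega⟩ - b k)) < |boltz a - boltz b| := by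
  have : NeZero n := ⟨by omega⟩
  show (log n) ^ 2 * exp (-(a 0 - b k)) < |boltz a - boltz b|
  have hδ3 : 3 ≤ δ := by linarith [log_natCast_nonneg n]
  have hsepk : δ < a k - b k := by simpa [abs_of_pos (sub_pos.2 hk)] using hsep k k hk.ne'
  have hlhs : (log n) ^ 2 * exp (-(a 0 - b k)) < exp (-(a 0 - a k)) :=
    calc (log n) ^ 2 * exp (-(a 0 - b k)) ≤ exp (2 * log n) * exp (-(a 0 - a k) - δ) :=
          mul_le_mul (sq_le_exp_two_mul (log_natCast_nonneg n)) (exp_le_exp.2 (by linarith))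
            (exp_pos _).le (exp_pos _).le
      _ = exp (2 * log n - δ + -(a 0 - a k)) := by rw [← exp_add]; ring_nf
      _ < exp (-(a 0 - a k)) := exp_lt_exp.2 (by linarith)
  rcases (Fin.zero_le k).eq_or_lt with rfl | hk0
  · have hb := boltz_le_of_forall_le fun i => antitone_of_gap (by linarith) hbgap (Fin.zero_le i)
    have ha := sub_le_boltz_of_gap hagap hδ3
    rw [sub_self, neg_zero, exp_zero] at hlhs
    rw [abs_of_pos (by linarith)]
    linarith
  · have hboltz := mul_exp_neg_div_two_le_boltz_sub_boltz hδ3 hagap hbgap hk0 hpre hsepk.le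
    have hd : 2 ≤ a 0 - a k := by linarith [hagap 0 k hk0]
    rw [abs_sub_comm]
    nlinarith [le_abs_self (boltz b - boltz a), exp_pos (-(a 0 - a k))]

end
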